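/- arXiv:2604.08661 — 3 statements merged into one kernel-verified Lean document; each statement's English description precedes it below -/
import Mathlib

section
/- Let B ≥ 2 be an integer, m ≥ 1 an integer, and λ a real number with 0 < λ < 1. Set α = −(B − 1)·log_B λ (so α > 0). Then λ^(s_B(m)) ≥ λ^(B−1) · m^(−α), where λ^(s_B(m)) and λ^(B−1) are natural-number powers and m^(−α) is a real power. In particular, the shortest-path attenuation λ^(ℓ_min(m)) = λ^(s_B(m)) is bounded below by a power law Ω(m^(−α)) in the lag m. -/
/-- **Power-law lower bound on the shortest-path attenuation.** For integers `B ≥ 2`,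
`m ≥ 1` and real `0 < λ < 1`, with `α = −(B − 1)·log_B λ`, the attenuation along the
shortest path satisfies `λ^(s_B(m)) ≥ λ^(B−1) · m^(−α)`. -/
theorem attenuation_power_law_lower_bound (B m : ℕ) (hB : 2 ≤ B) (hm : 1 ≤ m)
    (lam : ℝ) (h0 : 0 < lam) (h1 : lam < 1)
    (α : ℝ) (hα : α = -(((B : ℝ) - 1) * Real.logb B lam)) :
    lam ^ (Nat.digits B m).sum ≥ lam ^ (B - 1) * (m : ℝ) ^ (-α) := by
  have hm0 : m ≠ 0 := by omega
  set L := Nat.log B m with hL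
  have hBpos : (0:ℝ) < B := by positivity
  have hB1 : (1:ℝ) < B := by exact_mod_cast (by omega : 1 < B)
  have hmpos : (0:ℝ) < m := by exact_mod_cast (by omega : 0 < m)
  -- digit sum bound
  have hs : (Nat.digits B m).sum ≤ (B - 1) * (L + 1) := by
    have hlen : (Nat.digits B m).length = L + 1 := Nat.digits_len B m (by omega) hm0
    have := List.sum_le_card_nsmul (Nat.digits B m) (B - 1) (fun x hx => by
      have := Nat.digits_lt_base (by omega) hx
      omega)
    simpa [hlen, smul_eq_mul, Nat.mul_comm] using this
  have h2 : lam ^ ((B - 1) * (L + 1)) ≤ lam ^ (Nat.digits B m).sum :=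
    pow_le_pow_of_le_one h0.le h1.le hs
  -- split
  have hsplit : lam ^ ((B - 1) * (L + 1)) = lam ^ (B - 1) * lam ^ ((B - 1) * L) := by
    rw [Nat.mul_add, Nat.mul_one, pow_add, mul_comm]
  -- key rpow inequality
  have hlogneg : Real.logb B lam < 0 := Real.logb_neg hB1 h0 h1
  have key : (m:ℝ) ^ (-α) ≤ lam ^ ((B - 1) * L) := by
    rw [hα, neg_neg]
    have hlam : ((B:ℝ)) ^ (Real.logb B lam) = lam := Real.rpow_logb hBpos (by linarith) h0
    have hmrw : ((B:ℝ)) ^ (Real.logb B m) = (m:ℝ) := Real.rpow_logb hBpos (by linarith) hmpos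
    have hcast : (lam : ℝ) ^ ((B - 1) * L) = (B:ℝ) ^ (Real.logb B lam * (((B - 1) * L : ℕ) : ℝ)) := by
      rw [Real.rpow_mul hBpos.le, hlam, Real.rpow_natCast]
    rw [hcast, ← hmrw, ← Real.rpow_mul hBpos.le]
    rw [Real.rpow_le_rpow_left_iff hB1]
    have hLle : (L : ℝ) ≤ Real.logb B m := Real.natLog_le_logb m B
    have hc : ((B:ℝ) - 1) * Real.logb B lam < 0 := by
      have : (0:ℝ) < (B:ℝ) - 1 := by linarith
      exact mul_neg_of_pos_of_neg this hlogneg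
    calc Real.logb B m * (((B:ℝ) - 1) * Real.logb B lam)
        ≤ (L:ℝ) * (((B:ℝ) - 1) * Real.logb B lam) := by
          exact mul_le_mul_of_nonpos_right hLle hc.le
      _ = Real.logb B lam * (((B - 1) * L : ℕ) : ℝ) := by
          push_cast [Nat.cast_sub (by omega : 1 ≤ B)]
          ring
  calc lam ^ (B - 1) * (m : ℝ) ^ (-α) ≤ lam ^ (B - 1) * lam ^ ((B - 1) * L) :=
        mul_le_mul_of_nonneg_left key (by positivity)
    _ = lam ^ ((B - 1) * (L + 1)) := hsplit.symm
    _ ≤ lam ^ (Nat.digits B m).sum := h2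
end

section
/- Let d ≥ 1, let c : Fin d → ℝ and λ : Fin d → ℝ with 0 < λ_j < 1 for all j, and define the lag kernel k(m) = ∑_j c_j λ_j^(m−1) for m ≥ 1 (k(0) = 0). Let β ≥ 0 satisfy β · ∑_j |c_j| / (1 − λ_j) < 1. Suppose C : ℕ → ℝ satisfies C(n) = β·∑_{j=1}^{n−1} k(n−j)·C(j) for all n ≥ 2. Then there exist M ≥ 0 and ρ ∈ (0, 1) such that |C(n)| ≤ M·ρ^n for all n ≥ 1. (This is the paper's conclusion that, in the weak-coupling regime, the first-order connected two-point correlation of the linearized vanilla RNN decays exponentially in the lag.) -/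
open Finset

lemma geom_aux {ρ l : ℝ} (h0 : 0 < l) (hlt : l < ρ) (n : ℕ) :
    ∑ j ∈ Finset.Ico 1 n, l ^ (n - 1 - j) * ρ ^ j ≤ ρ ^ n / (ρ - l) := by
  have hρ : 0 < ρ := h0.trans hlt
  have hd : 0 < ρ - l := by linarith
  induction n with
  | zero => simp
            exact hlt.le
  | succ n ih =>
    rcases Nat.eq_zero_or_pos n with h | h
    · subst h; simp; exact div_nonneg hρ.le hd.le
    · rw [Finset.sum_Ico_succ_top h]
      have e1 : (n + 1 - 1 - n : ℕ) = 0 := by omega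
      have e2 : ∑ j ∈ Finset.Ico 1 n, l ^ (n + 1 - 1 - j) * ρ ^ j
          = l * ∑ j ∈ Finset.Ico 1 n, l ^ (n - 1 - j) * ρ ^ j := by
        rw [Finset.mul_sum]
        apply Finset.sum_congr rfl
        intro j hj
        simp only [Finset.mem_Ico] at hj
        have : (n + 1 - 1 - j : ℕ) = (n - 1 - j) + 1 := by omega
        rw [this, pow_succ]
        ring
      rw [e1, e2, pow_zero, one_mul]
      have him := mul_le_mul_of_nonneg_left ih h0.le
      calc l * (∑ j ∈ Finset.Ico 1 n, l ^ (n - 1 - j) * ρ ^ j) + ρ ^ n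
          ≤ l * (ρ ^ n / (ρ - l)) + ρ ^ n := by linarith
        _ = ρ ^ (n + 1) / (ρ - l) := by field_simp; ring

/-- **Exponential decay of the first-order correlator of the linearized vanilla RNN.**
With lag kernel `k m = ∑ j, c j * (λ j)^(m−1)` for `m ≥ 1`, `0 < λ j < 1`, and a
weak-coupling parameter `β ≥ 0` with `β * ∑ j, |c j| / (1 − λ j) < 1`, any sequence `C`
satisfying the first-order recursion `C n = β ∑_{j=1}^{n−1} k (n−j) C j` for `n ≥ 2`
decays exponentially: `|C n| ≤ M ρ^n` for some `M ≥ 0` and `ρ ∈ (0, 1)`. -/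
theorem vanilla_correlator_exponential_decay (d : ℕ) (hd : 1 ≤ d)
    (c lam : Fin d → ℝ) (hlam : ∀ j, 0 < lam j ∧ lam j < 1)
    (k : ℕ → ℝ) (hk : ∀ m, 1 ≤ m → k m = ∑ j, c j * lam j ^ (m - 1))
    (β : ℝ) (hβ0 : 0 ≤ β) (hβ : β * ∑ j, |c j| / (1 - lam j) < 1)
    (Cs : ℕ → ℝ)
    (hrec : ∀ n, 2 ≤ n → Cs n = β * ∑ j ∈ Finset.Ico 1 n, k (n - j) * Cs j) :
    ∃ M ρ : ℝ, 0 ≤ M ∧ 0 < ρ ∧ ρ < 1 ∧ ∀ n, 1 ≤ n → |Cs n| ≤ M * ρ ^ n := by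
  have hcont : ContinuousAt (fun ρ : ℝ => β * ∑ j, |c j| / (ρ - lam j)) 1 := by
    apply ContinuousAt.mul continuousAt_const
    apply tendsto_finset_sum
    intro j _
    exact continuousAt_const.div (continuousAt_id.sub continuousAt_const)
      (by have := (hlam j).2; intro h; linarith)
  have h1 : ∀ᶠ ρ in nhds (1 : ℝ), β * ∑ j, |c j| / (ρ - lam j) < 1 :=
    hcont.eventually_lt continuousAt_const hβ
  have h2 : ∀ᶠ ρ in nhds (1 : ℝ), ∀ j, lam j < ρ := by
    rw [Filter.eventually_all]
    intro j
    exact eventually_gt_nhds (hlam j).2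
  have h3 : ∀ᶠ ρ in nhdsWithin (1 : ℝ) (Set.Iio 1),
      (β * ∑ j, |c j| / (ρ - lam j) < 1) ∧ (∀ j, lam j < ρ) ∧ ρ < 1 := by
    filter_upwards [nhdsWithin_le_nhds h1, nhdsWithin_le_nhds h2,
      self_mem_nhdsWithin] with ρ a b hc
    exact ⟨a, b, hc⟩
  obtain ⟨ρ, hS, hlr, hρ1⟩ := h3.exists
  have j0 : Fin d := ⟨0, hd⟩
  have hρ0 : 0 < ρ := (hlam j0).1.trans (hlr j0)
  refine ⟨|Cs 1| / ρ, ρ, by positivity, hρ0, hρ1, ?_⟩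
  set M := |Cs 1| / ρ with hM
  have hM0 : 0 ≤ M := by positivity
  intro n
  induction n using Nat.strong_induction_on with
  | _ n ih =>
    intro hn
    rcases eq_or_lt_of_le hn with h1' | h2'
    · rw [← h1', pow_one, hM, div_mul_cancel₀ _ (ne_of_gt hρ0)]
    · have hn2 : 2 ≤ n := h2'
      rw [hrec n hn2, abs_mul, abs_of_nonneg hβ0]
      have step1 : |∑ j ∈ Finset.Ico 1 n, k (n - j) * Cs j|
          ≤ ∑ j ∈ Finset.Ico 1 n, (∑ i, |c i| * lam i ^ (n - 1 - j)) * (M * ρ ^ j) := by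
        refine (Finset.abs_sum_le_sum_abs _ _).trans ?_
        apply Finset.sum_le_sum
        intro j hj
        simp only [Finset.mem_Ico] at hj
        rw [abs_mul]
        have hk1 : |k (n - j)| ≤ ∑ i, |c i| * lam i ^ (n - 1 - j) := by
          rw [hk (n - j) (by omega)]
          refine (Finset.abs_sum_le_sum_abs _ _).trans ?_
          apply Finset.sum_le_sum
          intro i _
          rw [abs_mul, abs_pow, abs_of_pos (hlam i).1]
          have e : (n - j - 1 : ℕ) = n - 1 - j := by omega
          rw [e]
        have hCj : |Cs j| ≤ M * ρ ^ j := ih j hj.2 hj.1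
        exact mul_le_mul hk1 hCj (abs_nonneg _)
          (Finset.sum_nonneg fun i _ => mul_nonneg (abs_nonneg _) (pow_nonneg (hlam i).1.le _))
      have step2 : ∑ j ∈ Finset.Ico 1 n, (∑ i, |c i| * lam i ^ (n - 1 - j)) * (M * ρ ^ j)
          ≤ M * (∑ i, |c i| / (ρ - lam i)) * ρ ^ n := by
        calc ∑ j ∈ Finset.Ico 1 n, (∑ i, |c i| * lam i ^ (n - 1 - j)) * (M * ρ ^ j)
            = ∑ j ∈ Finset.Ico 1 n, ∑ i, (|c i| * M) * (lam i ^ (n - 1 - j) * ρ ^ j) := by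
              apply Finset.sum_congr rfl
              intro j _
              rw [Finset.sum_mul]
              apply Finset.sum_congr rfl
              intro i _
              ring
          _ = ∑ i, (|c i| * M) * ∑ j ∈ Finset.Ico 1 n, lam i ^ (n - 1 - j) * ρ ^ j := by
              rw [Finset.sum_comm]
              simp [Finset.mul_sum]
          _ ≤ ∑ i, (|c i| * M) * (ρ ^ n / (ρ - lam i)) := by
              apply Finset.sum_le_sum
              intro i _
              exact mul_le_mul_of_nonneg_left (geom_aux (hlam i).1 (hlr i) n)
                (by positivity)
          _ = M * (∑ i, |c i| / (ρ - lam i)) * ρ ^ n := by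
              rw [Finset.mul_sum, Finset.sum_mul]
              apply Finset.sum_congr rfl
              intro i _
              ring
      calc β * |∑ j ∈ Finset.Ico 1 n, k (n - j) * Cs j|
          ≤ β * (M * (∑ i, |c i| / (ρ - lam i)) * ρ ^ n) := by
            apply mul_le_mul_of_nonneg_left (step1.trans step2) hβ0
        _ = (β * ∑ i, |c i| / (ρ - lam i)) * (M * ρ ^ n) := by ring
        _ ≤ 1 * (M * ρ ^ n) := by
            apply mul_le_mul_of_nonneg_right hS.le (by positivity)
        _ = M * ρ ^ n := one_mul _
end

section
/- Let B ≥ 2 be an integer, let β > 0, c > 0, and λ ∈ (0, 1) be real, and set α = −(B − 1)·log_B λ > 0. Let k : ℕ → ℝ satisfy k(m) ≥ c·λ^(s_B(m)) ≥ 0 for all m ≥ 1. Suppose C : ℕ → ℝ satisfies C(1) > 0 and C(n) = β·∑_{j=1}^{n−1} k(n−j)·C(j) for all n ≥ 2. Then C(n) ≥ 0 for all n ≥ 1, and for every n ≥ 2, C(n) ≥ β·C(1)·c·λ^(B−1)·(n − 1)^(−α), where (n−1)^(−α) is a real power. In particular, C(n) = Ω(n^(−α)): the first-order connected correlator of the linearized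 dilated RNN is bounded below by a power law in the lag. (This is the paper's main analytical claim for dilated RNNs.) -/
/-!
Keeping only the `j = 1` term of the recursion, whose other terms are nonnegative by strong
induction, gives `C n ≥ β · k (n - 1) · C 1 ≥ β c λ^{s_B(n-1)} C 1`. A number `m ≥ 1` has
`⌊log_B m⌋ + 1` digits, each at most `B - 1`, so `s_B(m) ≤ (B - 1)(log_B m + 1)` and, as
`λ ≤ 1`, `λ^{s_B(m)} ≥ λ^{B-1} λ^{(B-1) log_B m} = λ^{B-1} m^{-α}`.
-/

theorem Nat.digits_sum_le_mul_log_add_one {b : ℕ} (hb : 1 < b) (m : ℕ) :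
    (b.digits m).sum ≤ (b - 1) * (Nat.log b m + 1) := by
  have hlen : (b.digits m).length ≤ Nat.log b m + 1 :=
    (Nat.digits_length_le_iff hb m).2 (Nat.lt_pow_succ_log_self hb m)
  have hdigit : ∀ d ∈ b.digits m, d ≤ b - 1 := fun d hd =>
    Nat.le_sub_one_of_lt (Nat.digits_lt_base hb hd)
  calc (b.digits m).sum ≤ (b.digits m).length • (b - 1) := List.sum_le_card_nsmul _ _ hdigit
    _ ≤ (Nat.log b m + 1) * (b - 1) := Nat.mul_le_mul_right _ hlen
    _ = (b - 1) * (Nat.log b m + 1) := Nat.mul_comm _ _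

theorem Real.rpow_mul_logb_comm {x y : ℝ} (hx : 0 < x) (hy : 0 < y) (b t : ℝ) :
    x ^ (t * Real.logb b y) = y ^ (t * Real.logb b x) := by
  rw [Real.rpow_def_of_pos hx, Real.rpow_def_of_pos hy, Real.logb, Real.logb]
  ring_nf

theorem pow_sub_one_mul_rpow_le_pow_digits_sum {b : ℕ} (hb : 1 < b) {lam : ℝ} (h0 : 0 < lam)
    (h1 : lam ≤ 1) {m : ℕ} (hm : m ≠ 0) :
    lam ^ (b - 1) * (m : ℝ) ^ (((b : ℝ) - 1) * Real.logb b lam) ≤ lam ^ (b.digits m).sum := by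
  have hlog : (((b - 1) * Nat.log b m : ℕ) : ℝ) ≤ ((b : ℝ) - 1) * Real.logb b m := by
    rw [Nat.cast_mul, Nat.cast_sub hb.le, Nat.cast_one]
    exact mul_le_mul_of_nonneg_left (Real.natLog_le_logb m b)
      (sub_nonneg.2 (Nat.one_le_cast.2 hb.le))
  calc lam ^ (b - 1) * (m : ℝ) ^ (((b : ℝ) - 1) * Real.logb b lam)
      = lam ^ (b - 1) * lam ^ (((b : ℝ) - 1) * Real.logb b m) := by
        rw [Real.rpow_mul_logb_comm (Nat.cast_pos.2 (Nat.pos_of_ne_zero hm)) h0]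
    _ ≤ lam ^ (b - 1) * lam ^ ((b - 1) * Nat.log b m) := by
        rw [← Real.rpow_natCast lam ((b - 1) * Nat.log b m)]
        exact mul_le_mul_of_nonneg_left (Real.rpow_le_rpow_of_exponent_ge h0 h1 hlog)
          (pow_nonneg h0.le _)
    _ = lam ^ ((b - 1) * (Nat.log b m + 1)) := by ring
    _ ≤ lam ^ (b.digits m).sum :=
        pow_le_pow_of_le_one h0.le h1 (Nat.digits_sum_le_mul_log_add_one hb m)

section ConvolutionRecurrence

variable {β : ℝ} {k C : ℕ → ℝ}

theorem nonneg_of_convolution_recurrence (hβ : 0 ≤ β) (hk : ∀ m, 1 ≤ m → 0 ≤ k m)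
    (hC1 : 0 ≤ C 1)
    (hrec : ∀ n, 2 ≤ n → C n = β * ∑ j ∈ Finset.Ico 1 n, k (n - j) * C j) :
    ∀ n, 1 ≤ n → 0 ≤ C n := by
  intro n
  induction n using Nat.strong_induction_on with
  | _ n ih =>
    intro hn
    obtain rfl | hn2 : n = 1 ∨ 2 ≤ n := by omega
    · exact hC1
    rw [hrec n hn2]
    refine mul_nonneg hβ (Finset.sum_nonneg fun j hj => ?_)
    rw [Finset.mem_Ico] at hj
    exact mul_nonneg (hk _ (by omega)) (ih j hj.2 hj.1)

theorem mul_kernel_mul_le_of_convolution_recurrence (hβ : 0 ≤ β)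
    (hk : ∀ m, 1 ≤ m → 0 ≤ k m)
    (hC1 : 0 ≤ C 1)
    (hrec : ∀ n, 2 ≤ n → C n = β * ∑ j ∈ Finset.Ico 1 n, k (n - j) * C j)
    {n : ℕ} (hn : 2 ≤ n) :
    β * k (n - 1) * C 1 ≤ C n := by
  have hC := nonneg_of_convolution_recurrence hβ hk hC1 hrec
  rw [hrec n hn, mul_assoc]
  refine mul_le_mul_of_nonneg_left (Finset.single_le_sum (f := fun j => k (n - j) * C j)
    (fun j hj => ?_) ?_) hβ
  · rw [Finset.mem_Ico] at hj
    exact mul_nonneg (hk _ (by omega)) (hC j hj.1)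
  · exact Finset.mem_Ico.2 ⟨le_rfl, by omega⟩

end ConvolutionRecurrence

/-- **Power-law lower bound for the dilated RNN first-order correlator.** Let `B ≥ 2`,
`β > 0`, `c > 0`, `0 < λ < 1`, and `α = −(B − 1)·log_B λ`. If the lag kernel satisfies
`k m ≥ c · λ^(s_B(m)) ≥ 0` for all `m ≥ 1`, and `C` satisfies `C 1 > 0` together with
the first-order recursion `C n = β ∑_{j=1}^{n−1} k (n−j) C j` for `n ≥ 2`, then
`C n ≥ 0` for all `n ≥ 1`, and for every `n ≥ 2`,
`C n ≥ β · C 1 · c · λ^(B−1) · (n − 1)^(−α)`. -/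
theorem dilated_correlator_power_law_lower_bound (B : ℕ) (hB : 2 ≤ B)
    (β c lam : ℝ) (hβ : 0 < β) (hc : 0 < c) (h0 : 0 < lam) (h1 : lam < 1)
    (α : ℝ) (hα : α = -(((B : ℝ) - 1) * Real.logb B lam))
    (k : ℕ → ℝ)
    (hk : ∀ m, 1 ≤ m →
      c * lam ^ (Nat.digits B m).sum ≤ k m ∧ 0 ≤ c * lam ^ (Nat.digits B m).sum)
    (Cs : ℕ → ℝ) (hC1 : 0 < Cs 1)
    (hrec : ∀ n, 2 ≤ n → Cs n = β * ∑ j ∈ Finset.Ico 1 n, k (n - j) * Cs j) :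
    (∀ n, 1 ≤ n → 0 ≤ Cs n) ∧
    ∀ n, 2 ≤ n →
      Cs n ≥ β * Cs 1 * c * lam ^ (B - 1) * ((n : ℝ) - 1) ^ (-α) := by
  have hk_nonneg : ∀ m, 1 ≤ m → 0 ≤ k m := fun m hm => (hk m hm).2.trans (hk m hm).1
  refine ⟨nonneg_of_convolution_recurrence hβ.le hk_nonneg hC1.le hrec, fun n hn => ?_⟩
  have hdigits := pow_sub_one_mul_rpow_le_pow_digits_sum (b := B) (by omega) h0 h1.le
    (show n - 1 ≠ 0 by omega)
  rw [Nat.cast_sub (by omega : 1 ≤ n), Nat.cast_one] at hdigits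
  calc β * Cs 1 * c * lam ^ (B - 1) * ((n : ℝ) - 1) ^ (-α)
      = β * (c * (lam ^ (B - 1) * ((n : ℝ) - 1) ^ (((B : ℝ) - 1) * Real.logb B lam)))
          * Cs 1 := by
        rw [hα, neg_neg]; ring
    _ ≤ β * (c * lam ^ (B.digits (n - 1)).sum) * Cs 1 := by gcongr
    _ ≤ β * k (n - 1) * Cs 1 := by gcongr; exact (hk _ (by omega)).1
    _ ≤ Cs n := mul_kernel_mul_le_of_convolution_recurrence hβ.le hk_nonneg hC1.le hrec hn
end
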